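/- Let K1 and K2 be quantum channels with fixed points ρ1 and ρ2 respectively, and let τ be a positive integer such that for every density matrix ρ, ‖K1^τ[ρ] − ρ1‖₁ ≤ ε. Then ‖ρ1 − ρ2‖₁ ≤ ε + τ·‖K1 − K2‖_{1→1}, where ‖M‖_{1→1} = sup over density matrices ρ of ‖M[ρ]‖₁. -/

import Mathlib

/-!
Write `ρ1 - ρ2 = (ρ1 - K1^τ ρ2) + (K1^τ ρ2 - ρ2)`. The first term is at most `ε` by mixing.
Since `K2` fixes `ρ2`, `K1 ρ2 - ρ2 = (K1 - K2) ρ2`, and the telescoping identity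
`K1^(m+1) ρ2 - ρ2 = K1 (K1^m ρ2 - ρ2) + (K1 ρ2 - ρ2)` together with trace-norm contractivity
of `K1` bounds the second term by `τ ‖K1 - K2‖_{1→1}`.

Triangle inequality and contractivity (on Hermitian matrices) both reduce, via the Jordan
decomposition `X = X⁺ - X⁻`, `‖X‖₁ = tr X⁺ + tr X⁻`, to `‖A - B‖₁ ≤ tr A + tr B` for
`A, B ≥ 0`; for that, `tr (A - B)⁺ = tr (P (A - B)) ≤ tr (P A) ≤ tr A` with `P` the spectral
projection of `A - B` onto its positive part.
-/

open MeasureTheory Matrix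
open scoped ComplexOrder

/-- The square root of a positive semidefinite matrix (as defined in Mathlib, December 2024;
removed from Mathlib since). -/
noncomputable def Matrix.PosSemidef.sqrt {n : Type*} [Fintype n] [DecidableEq n] {A : Matrix n n ℂ}
    (hA : A.PosSemidef) : Matrix n n ℂ :=
  hA.1.eigenvectorUnitary.1 * diagonal ((↑) ∘ (√·) ∘ hA.1.eigenvalues) *
  (star hA.1.eigenvectorUnitary : Matrix n n ℂ)

/-- The trace norm (Schatten 1-norm) of a complex square matrix. -/
noncomputable def traceNorm {n : Type*} [Fintype n] [DecidableEq n] (A : Matrix n n ℂ) : ℝ :=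
  ((Matrix.PosSemidef.sqrt (Matrix.posSemidef_conjTranspose_mul_self A)).trace).re

/-- The operator norm (Schatten ∞-norm) of a complex square matrix. -/
noncomputable def opNorm {n : Type*} [Fintype n] [DecidableEq n] (A : Matrix n n ℂ) : ℝ :=
  ‖Matrix.toEuclideanCLM (𝕜 := ℂ) (n := n) A‖

/-- A density matrix: positive semidefinite with unit trace. -/
def IsDensityMatrix {n : Type*} [Fintype n] [DecidableEq n] (ρ : Matrix n n ℂ) : Prop :=
  ρ.PosSemidef ∧ ρ.trace = 1

def IsTracePreserving {n : Type*} [Fintype n] [DecidableEq n]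
    (Φ : Matrix n n ℂ →ₗ[ℂ] Matrix n n ℂ) : Prop :=
  ∀ A, (Φ A).trace = A.trace

/-- Complete positivity: all finite ampliations map positive semidefinite matrices to
positive semidefinite matrices. -/
def IsCompletelyPositive {n : Type*} [Fintype n] [DecidableEq n]
    (Φ : Matrix n n ℂ →ₗ[ℂ] Matrix n n ℂ) : Prop :=
  ∀ (k : ℕ) (A : Matrix (n × Fin k) (n × Fin k) ℂ), A.PosSemidef →
    (Matrix.of fun (p q : n × Fin k) =>
      Φ (Matrix.of fun i j => A (i, p.2) (j, q.2)) p.1 q.1).PosSemidef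

/-- A quantum channel: completely positive and trace preserving. -/
def IsQuantumChannel {n : Type*} [Fintype n] [DecidableEq n]
    (Φ : Matrix n n ℂ →ₗ[ℂ] Matrix n n ℂ) : Prop :=
  IsCompletelyPositive Φ ∧ IsTracePreserving Φ

/-- The induced 1→1 norm of a superoperator: supremum of trace norms of images of
density matrices. -/
noncomputable def norm11 {n : Type*} [Fintype n] [DecidableEq n]
    (M : Matrix n n ℂ → Matrix n n ℂ) : ℝ :=
  ⨆ ρ : {ρ : Matrix n n ℂ // IsDensityMatrix ρ}, traceNorm (M ρ)

/-- The induced 1→1 norm of a superoperator: supremum of trace norms of images of the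
trace-norm unit ball. -/
noncomputable def norm11Ball {n : Type*} [Fintype n] [DecidableEq n]
    (M : Matrix n n ℂ → Matrix n n ℂ) : ℝ :=
  ⨆ X : {X : Matrix n n ℂ // traceNorm X ≤ 1}, traceNorm (M X)



open scoped MatrixOrder

namespace Matrix

variable {n : Type*} [Fintype n] [DecidableEq n]

lemma PosSemidef.sqrt_eq_cfcSqrt {A : Matrix n n ℂ} (hA : A.PosSemidef) :
    hA.sqrt = CFC.sqrt A := by
  rw [CFC.sqrt_eq_real_sqrt A hA.nonneg, cfcₙ_eq_cfc, hA.1.cfc_eq]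
  rfl

lemma traceNorm_eq_re_trace_cfcAbs (A : Matrix n n ℂ) : traceNorm A = (CFC.abs A).trace.re := by
  rw [traceNorm, PosSemidef.sqrt_eq_cfcSqrt]
  rfl

lemma traceNorm_neg (A : Matrix n n ℂ) : traceNorm (-A) = traceNorm A := by
  rw [traceNorm_eq_re_trace_cfcAbs, CFC.abs_neg, traceNorm_eq_re_trace_cfcAbs]

lemma IsHermitian.traceNorm_eq_trace_posPart_add_trace_negPart {X : Matrix n n ℂ}
    (hX : X.IsHermitian) : traceNorm X = (X⁺).trace.re + (X⁻).trace.re := by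
  rw [traceNorm_eq_re_trace_cfcAbs, ← CFC.posPart_add_negPart X hX.isSelfAdjoint, trace_add,
    Complex.add_re]

lemma PosSemidef.re_trace_mul_nonneg {A B : Matrix n n ℂ} (hA : A.PosSemidef)
    (hB : B.PosSemidef) : 0 ≤ (A * B).trace.re := by
  set S := CFC.sqrt A
  have hS : Sᴴ = S := (CFC.sqrt_nonneg A).posSemidef.1
  have hSS : S * S = A := CFC.sqrt_mul_sqrt_self A hA.nonneg
  have h : (A * B).trace = (Sᴴ * B * S).trace := by
    rw [hS, ← hSS, Matrix.mul_assoc, trace_mul_comm, Matrix.mul_assoc]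
  rw [h]
  exact (Complex.nonneg_iff.mp (hB.conjTranspose_mul_mul_same S).trace_nonneg).1

lemma re_trace_posPart_sub_le {A B : Matrix n n ℂ} (hA : A.PosSemidef) (hB : B.PosSemidef) :
    ((A - B)⁺).trace.re ≤ A.trace.re := by
  set X := A - B
  have hfin := X.finite_real_spectrum
  set P := cfc (fun x : ℝ => if 0 < x then (1 : ℝ) else 0) X
  have hPX : P * X = X⁺ := by
    have hX : IsSelfAdjoint X := (hA.1.sub hB.1).isSelfAdjoint
    conv_lhs => arg 2; rw [← cfc_id' ℝ X]
    rw [← cfc_mul _ _ X (hfin.continuousOn _), CFC.posPart_def, cfcₙ_eq_cfc]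
    refine cfc_congr fun x _ => ?_
    split_ifs with hx
    · rw [one_mul, posPart_eq_self.mpr hx.le]
    · rw [zero_mul, posPart_eq_zero.mpr (not_lt.mp hx)]
  have hP : 0 ≤ P := cfc_nonneg fun x _ => by positivity
  have hP1 : P ≤ 1 := cfc_le_one _ _ fun x _ => by split_ifs <;> norm_num
  have hPB := hP.posSemidef.re_trace_mul_nonneg hB
  have hPA := (sub_nonneg.mpr hP1).posSemidef.re_trace_mul_nonneg hA
  rw [← hPX, Matrix.mul_sub, trace_sub, Complex.sub_re]
  rw [Matrix.sub_mul, Matrix.one_mul, trace_sub, Complex.sub_re] at hPA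
  linarith

lemma traceNorm_sub_le {A B : Matrix n n ℂ} (hA : A.PosSemidef) (hB : B.PosSemidef) :
    traceNorm (A - B) ≤ A.trace.re + B.trace.re := by
  rw [(hA.1.sub hB.1).traceNorm_eq_trace_posPart_add_trace_negPart, ← CFC.posPart_neg, neg_sub]
  exact add_le_add (re_trace_posPart_sub_le hA hB) (re_trace_posPart_sub_le hB hA)

lemma IsHermitian.traceNorm_add_le {X Y : Matrix n n ℂ} (hX : X.IsHermitian)
    (hY : Y.IsHermitian) : traceNorm (X + Y) ≤ traceNorm X + traceNorm Y := by
  have hXY : X + Y = (X⁺ + Y⁺) - (X⁻ + Y⁻) := by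
    rw [add_sub_add_comm, CFC.posPart_sub_negPart X hX.isSelfAdjoint,
      CFC.posPart_sub_negPart Y hY.isSelfAdjoint]
  have hpos := (CFC.posPart_nonneg X).posSemidef.add (CFC.posPart_nonneg Y).posSemidef
  have hneg := (CFC.negPart_nonneg X).posSemidef.add (CFC.negPart_nonneg Y).posSemidef
  rw [hXY, hX.traceNorm_eq_trace_posPart_add_trace_negPart,
    hY.traceNorm_eq_trace_posPart_add_trace_negPart]
  refine (traceNorm_sub_le hpos hneg).trans_eq ?_
  simp only [trace_add, Complex.add_re]
  ring

end Matrix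

open Matrix

section PositiveMap

variable {n : Type*} [Fintype n] [DecidableEq n] {Φ : Matrix n n ℂ →ₗ[ℂ] Matrix n n ℂ}

lemma IsCompletelyPositive.posSemidef_map (hΦ : IsCompletelyPositive Φ) {A : Matrix n n ℂ}
    (hA : A.PosSemidef) : (Φ A).PosSemidef := by
  have h := hΦ 1 (Matrix.of fun p q => A p.1 q.1) (hA.submatrix Prod.fst)
  exact h.submatrix (fun i : n => (i, (0 : Fin 1)))

lemma isHermitian_map_of_posSemidef_map (hΦ : ∀ A, A.PosSemidef → (Φ A).PosSemidef)
    {X : Matrix n n ℂ} (hX : X.IsHermitian) : (Φ X).IsHermitian := by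
  rw [← CFC.posPart_sub_negPart X hX.isSelfAdjoint, map_sub]
  exact (hΦ _ (CFC.posPart_nonneg X).posSemidef).1.sub (hΦ _ (CFC.negPart_nonneg X).posSemidef).1

lemma isHermitian_iterate_map (hΦ : ∀ A, A.PosSemidef → (Φ A).PosSemidef)
    {X : Matrix n n ℂ} (hX : X.IsHermitian) (m : ℕ) : ((⇑Φ)^[m] X).IsHermitian :=
  Function.Iterate.rec IsHermitian hX (fun _ => isHermitian_map_of_posSemidef_map hΦ) m

lemma traceNorm_map_le (hΦ : ∀ A, A.PosSemidef → (Φ A).PosSemidef)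
    (hTP : IsTracePreserving Φ) {X : Matrix n n ℂ} (hX : X.IsHermitian) :
    traceNorm (Φ X) ≤ traceNorm X := by
  have hpos := (CFC.posPart_nonneg X).posSemidef
  have hneg := (CFC.negPart_nonneg X).posSemidef
  calc traceNorm (Φ X) = traceNorm (Φ X⁺ - Φ X⁻) := by
        rw [← map_sub, CFC.posPart_sub_negPart X hX.isSelfAdjoint]
    _ ≤ (Φ X⁺).trace.re + (Φ X⁻).trace.re := traceNorm_sub_le (hΦ _ hpos) (hΦ _ hneg)
    _ = traceNorm X := by rw [hTP, hTP, hX.traceNorm_eq_trace_posPart_add_trace_negPart]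

lemma traceNorm_iterate_sub_le (hΦ : ∀ A, A.PosSemidef → (Φ A).PosSemidef)
    (hTP : IsTracePreserving Φ) {X : Matrix n n ℂ} (hX : X.IsHermitian) (m : ℕ) :
    traceNorm ((⇑Φ)^[m] X - X) ≤ m * traceNorm (Φ X - X) := by
  induction m with
  | zero => simp [traceNorm_eq_re_trace_cfcAbs]
  | succ m ih =>
    have hherm : ((⇑Φ)^[m] X - X).IsHermitian :=
      (isHermitian_iterate_map hΦ hX m).sub hX
    have hstep : (⇑Φ)^[m + 1] X - X = Φ ((⇑Φ)^[m] X - X) + (Φ X - X) := by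
      rw [map_sub, Function.iterate_succ_apply', sub_add_sub_cancel]
    calc traceNorm ((⇑Φ)^[m + 1] X - X)
        ≤ traceNorm (Φ ((⇑Φ)^[m] X - X)) + traceNorm (Φ X - X) := by
          rw [hstep]
          exact (isHermitian_map_of_posSemidef_map hΦ hherm).traceNorm_add_le
            ((isHermitian_map_of_posSemidef_map hΦ hX).sub hX)
      _ ≤ m * traceNorm (Φ X - X) + traceNorm (Φ X - X) := by
          gcongr
          exact (traceNorm_map_le hΦ hTP hherm).trans ih
      _ = (m + 1 : ℕ) * traceNorm (Φ X - X) := by push_cast; ring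

end PositiveMap

section Channel

variable {n : Type*} [Fintype n] [DecidableEq n]

lemma traceNorm_le_norm11 {M : Matrix n n ℂ → Matrix n n ℂ} {C : ℝ}
    (hC : ∀ ρ, IsDensityMatrix ρ → traceNorm (M ρ) ≤ C) {ρ : Matrix n n ℂ}
    (hρ : IsDensityMatrix ρ) : traceNorm (M ρ) ≤ norm11 M := by
  have hbdd : BddAbove
      (Set.range fun σ : {σ : Matrix n n ℂ // IsDensityMatrix σ} => traceNorm (M σ)) :=
    ⟨C, by rintro _ ⟨σ, rfl⟩; exact hC σ σ.2⟩
  exact le_ciSup hbdd ⟨ρ, hρ⟩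

lemma IsQuantumChannel.traceNorm_sub_le_two {Φ Ψ : Matrix n n ℂ →ₗ[ℂ] Matrix n n ℂ}
    (hΦ : IsQuantumChannel Φ) (hΨ : IsQuantumChannel Ψ) {ρ : Matrix n n ℂ}
    (hρ : IsDensityMatrix ρ) : traceNorm (Φ ρ - Ψ ρ) ≤ 2 := by
  refine (traceNorm_sub_le (hΦ.1.posSemidef_map hρ.1) (hΨ.1.posSemidef_map hρ.1)).trans_eq ?_
  rw [hΦ.2, hΨ.2, hρ.2]
  norm_num

end Channel

theorem fixed_point_distance_bound_channel_norm_general {n : Type*} [Fintype n] [DecidableEq n]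
    (K1 K2 : Matrix n n ℂ →ₗ[ℂ] Matrix n n ℂ)
    (hK1 : IsQuantumChannel K1) (hK2 : IsQuantumChannel K2)
    (ρ1 ρ2 : Matrix n n ℂ) (hρ1 : IsDensityMatrix ρ1) (hρ2 : IsDensityMatrix ρ2)
    (hfix2 : K2 ρ2 = ρ2)
    (τ : ℕ) (ε : ℝ)
    (hmix : ∀ ρ : Matrix n n ℂ, IsDensityMatrix ρ → traceNorm ((⇑K1)^[τ] ρ - ρ1) ≤ ε) :
    traceNorm (ρ1 - ρ2) ≤ ε + τ * norm11 (fun ρ => K1 ρ - K2 ρ) := by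
  have hpos : ∀ A : Matrix n n ℂ, A.PosSemidef → (K1 A).PosSemidef :=
    fun _ => hK1.1.posSemidef_map
  have hσ : ((⇑K1)^[τ] ρ2).IsHermitian := isHermitian_iterate_map hpos hρ2.1.1 τ
  have hstep : traceNorm (K1 ρ2 - ρ2) ≤ norm11 (fun ρ => K1 ρ - K2 ρ) := by
    nth_rw 2 [← hfix2]
    exact traceNorm_le_norm11 (fun _ => hK1.traceNorm_sub_le_two hK2) hρ2
  calc traceNorm (ρ1 - ρ2)
      = traceNorm (-((⇑K1)^[τ] ρ2 - ρ1) + ((⇑K1)^[τ] ρ2 - ρ2)) := by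
        rw [neg_sub, sub_add_sub_cancel]
    _ ≤ traceNorm ((⇑K1)^[τ] ρ2 - ρ1) + traceNorm ((⇑K1)^[τ] ρ2 - ρ2) := by
        rw [← traceNorm_neg ((⇑K1)^[τ] ρ2 - ρ1)]
        exact (hσ.sub hρ1.1.1).neg.traceNorm_add_le (hσ.sub hρ2.1.1)
    _ ≤ ε + τ * norm11 (fun ρ => K1 ρ - K2 ρ) := by
        gcongr
        · exact hmix ρ2 hρ2
        · calc traceNorm ((⇑K1)^[τ] ρ2 - ρ2) ≤ τ * traceNorm (K1 ρ2 - ρ2) :=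
                traceNorm_iterate_sub_le hpos hK1.2 hρ2.1.1 τ
            _ ≤ τ * norm11 (fun ρ => K1 ρ - K2 ρ) := by gcongr

theorem fixed_point_distance_bound_channel_norm {n : Type*} [Fintype n] [DecidableEq n]
    (K1 K2 : Matrix n n ℂ →ₗ[ℂ] Matrix n n ℂ)
    (hK1 : IsQuantumChannel K1) (hK2 : IsQuantumChannel K2)
    (ρ1 ρ2 : Matrix n n ℂ) (hρ1 : IsDensityMatrix ρ1) (hρ2 : IsDensityMatrix ρ2)
    (hfix1 : K1 ρ1 = ρ1) (hfix2 : K2 ρ2 = ρ2)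
    (τ : ℕ) (hτ : 0 < τ) (ε : ℝ)
    (hmix : ∀ ρ : Matrix n n ℂ, IsDensityMatrix ρ → traceNorm ((⇑K1)^[τ] ρ - ρ1) ≤ ε) :
    traceNorm (ρ1 - ρ2) ≤ ε + τ * norm11 (fun ρ => K1 ρ - K2 ρ) :=
  fixed_point_distance_bound_channel_norm_general K1 K2 hK1 hK2 ρ1 ρ2 hρ1 hρ2 hfix2 τ ε hmix
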